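/- arXiv:2010.04261 — 2 statements merged into one kernel-verified Lean document; each statement's English description precedes it below -/
import Mathlib

section
/- Let c ≥ 2 be an integer and p ∈ ℝ^c a vector with strictly positive entries summing to 1, and set A = diag(p) − p pᵀ and p₀ = min_{i∈[c]} p_i. Then for every unit vector v ∈ ℝ^c with ∑_{i=1}^c v_i = 0 one has vᵀ A v ≥ p₀²/(2c). -/
open Matrix

/-- **Quadratic-form lower bound for the softmax Hessian on the sum-zero sphere.**
For `c ≥ 2`, a strictly positive probability vector `p`, `A = diag p - p pᵀ` and
`p₀ = min_i p_i`, every unit vector `v` with `∑ i, v i = 0` satisfies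
`vᵀ A v ≥ p₀² / (2c)`. -/
theorem softmax_hessian_quadratic_lower_bound
    (c : ℕ) (hc : 2 ≤ c) (p : Fin c → ℝ)
    (hpos : ∀ i, 0 < p i) (hsum : ∑ i, p i = 1)
    (v : Fin c → ℝ) (hv : ∑ i, (v i) ^ 2 = 1) (hv0 : ∑ i, v i = 0) :
    (⨅ i, p i) ^ 2 / (2 * c) ≤
      v ⬝ᵥ (Matrix.diagonal p - Matrix.vecMulVec p p).mulVec v := by
  haveI : Nonempty (Fin c) := ⟨⟨0, by omega⟩⟩
  obtain ⟨j, hj⟩ := Finite.exists_min p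
  have hinf : (⨅ i, p i) = p j :=
    le_antisymm (ciInf_le (Finite.bddBelow_range p) j) (le_ciInf hj)
  set m := ∑ i, p i * v i with hm
  have hQ : v ⬝ᵥ (Matrix.diagonal p - Matrix.vecMulVec p p).mulVec v
      = ∑ i, p i * (v i - m) ^ 2 := by
    rw [Matrix.sub_mulVec, dotProduct_sub]
    have d1 : v ⬝ᵥ (Matrix.diagonal p).mulVec v = ∑ i, v i * (p i * v i) := by
      simp [dotProduct, Matrix.mulVec_diagonal]
    have d2 : v ⬝ᵥ (Matrix.vecMulVec p p).mulVec v = ∑ i, v i * (p i * m) := by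
      simp only [dotProduct, Matrix.mulVec, Matrix.vecMulVec_apply]
      refine Finset.sum_congr rfl (fun i _ => ?_)
      rw [show (∑ k, p i * p k * v k) = p i * m by
        rw [Finset.mul_sum]; exact Finset.sum_congr rfl (fun k _ => by ring)]
    rw [d1, d2]
    have expand : ∀ i : Fin c, p i * (v i - m) ^ 2
        = v i * (p i * v i) - (2 * m) * (p i * v i) + m ^ 2 * p i := by
      intro i; ring
    rw [Finset.sum_congr rfl (fun i _ => expand i)]
    rw [Finset.sum_add_distrib, Finset.sum_sub_distrib, ← Finset.mul_sum, ← Finset.mul_sum,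
      ← hm, hsum]
    have : ∀ i : Fin c, v i * (p i * m) = m * (p i * v i) := fun i => by ring
    rw [Finset.sum_congr rfl (fun i _ => this i), ← Finset.mul_sum, ← hm]
    ring
  rw [hQ, hinf]
  have hc' : (2:ℝ) ≤ (c:ℝ) := by exact_mod_cast hc
  have hsq : ∑ i, (v i - m) ^ 2 = 1 + c * m ^ 2 := by
    have : ∀ i : Fin c, (v i - m) ^ 2 = v i ^ 2 - 2 * m * v i + m ^ 2 := fun i => by ring
    rw [Finset.sum_congr rfl (fun i _ => this i), Finset.sum_add_distrib,
      Finset.sum_sub_distrib, hv, ← Finset.mul_sum, hv0, Finset.sum_const,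
      Finset.card_univ, Fintype.card_fin, nsmul_eq_mul]
    ring
  have h1 : p j * (1 + c * m ^ 2) ≤ ∑ i, p i * (v i - m) ^ 2 := by
    rw [← hsq, Finset.mul_sum]
    exact Finset.sum_le_sum (fun i _ => mul_le_mul_of_nonneg_right (hj i) (sq_nonneg _))
  have hpj1 : p j ≤ 1 := by
    rw [← hsum]
    exact Finset.single_le_sum (fun i _ => (hpos i).le) (Finset.mem_univ j)
  have hpj0 : 0 < p j := hpos j
  have hmsq : 0 ≤ (c:ℝ) * m ^ 2 := by positivity
  have h2 : p j ≤ p j * (1 + c * m ^ 2) := by nlinarith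
  have h3 : p j ^ 2 / (2 * c) ≤ p j := by
    rw [div_le_iff₀ (by linarith)]
    nlinarith
  linarith
end

section
/- Let c ≥ 2 be an integer and σ > 0. Let z be a random vector on ℝ^c with law N(0, σ² I_c) (independent centered Gaussian coordinates with variance σ²), let p(z) = softmax(z) and A(z) = diag(p(z)) − p(z)p(z)ᵀ, and let à = E[A(z)] (entrywise expectation). Then à is a symmetric positive semidefinite c×c matrix, à · 1_c = 0, and the kernel of à equals the span of the all-ones vector 1_c; equivalently, à has rank exactly c − 1 and its (c−1)-st largest eigenvalue is strictly positive. -/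
open Matrix MeasureTheory ProbabilityTheory
open scoped NNReal

/-!
`A(z)` is the covariance matrix of the one-hot vector `e_I` with `I ~ softmax z`: its quadratic
form is the variance of `v` under `softmax z`, so `A(z)` is positive semidefinite, and since every
softmax weight is positive, `A(z) v = 0` exactly when `v` is constant. For an average of positive
semidefinite matrices, `Ã v = 0` forces `vᵀ A(z) v = 0`, hence `A(z) v = 0`, for almost every
`z`; so the kernel of `Ã` is again the constants, and rank–nullity gives `rank Ã = c - 1`.
-/

/-- The softmax function on `ℝ^c`. -/
noncomputable def softmaxFn {c : ℕ} (z : Fin c → ℝ) : Fin c → ℝ :=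
  fun i => Real.exp (z i) / ∑ k, Real.exp (z k)

/-- The Hessian `A(z) = diag (softmax z) - softmax z (softmax z)ᵀ` of the
cross-entropy loss with respect to the logits `z`. -/
noncomputable def logitHessian {c : ℕ} (z : Fin c → ℝ) : Matrix (Fin c) (Fin c) ℝ :=
  Matrix.diagonal (softmaxFn z) - Matrix.vecMulVec (softmaxFn z) (softmaxFn z)

section Softmax

variable {c : ℕ}

lemma sum_exp_pos (z : Fin c → ℝ) (i : Fin c) : 0 < ∑ k, Real.exp (z k) :=
  Finset.sum_pos (fun k _ => Real.exp_pos (z k)) ⟨i, Finset.mem_univ i⟩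

lemma softmaxFn_pos (z : Fin c → ℝ) (i : Fin c) : 0 < softmaxFn z i :=
  div_pos (Real.exp_pos _) (sum_exp_pos z i)

lemma softmaxFn_le_one (z : Fin c → ℝ) (i : Fin c) : softmaxFn z i ≤ 1 :=
  (div_le_one (sum_exp_pos z i)).2 <|
    Finset.single_le_sum (fun k _ => (Real.exp_pos (z k)).le) (Finset.mem_univ i)

lemma sum_softmaxFn [NeZero c] (z : Fin c → ℝ) : ∑ i, softmaxFn z i = 1 := by
  simp only [softmaxFn, ← Finset.sum_div]
  exact div_self (sum_exp_pos z 0).ne'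

lemma continuous_softmaxFn : Continuous (softmaxFn : (Fin c → ℝ) → Fin c → ℝ) :=
  continuous_pi fun i =>
    (Real.continuous_exp.comp (continuous_apply i)).div
      (continuous_finsetSum _ fun k _ => Real.continuous_exp.comp (continuous_apply k))
      fun z => (sum_exp_pos z i).ne'

end Softmax

section LogitHessian

variable {c : ℕ}

lemma logitHessian_apply (z : Fin c → ℝ) (i j : Fin c) :
    logitHessian z i j = diagonal (softmaxFn z) i j - softmaxFn z i * softmaxFn z j := by
  simp [logitHessian, vecMulVec_apply]

lemma abs_logitHessian_apply_le_one (z : Fin c → ℝ) (i j : Fin c) :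
    |logitHessian z i j| ≤ 1 := by
  have hi := softmaxFn_pos z i
  have hi' := softmaxFn_le_one z i
  have hj := softmaxFn_pos z j
  have hj' := softmaxFn_le_one z j
  rw [logitHessian_apply, abs_le]
  rcases eq_or_ne i j with rfl | hij
  · rw [diagonal_apply_eq]
    constructor <;> nlinarith
  · rw [diagonal_apply_ne _ hij]
    constructor <;> nlinarith

lemma continuous_logitHessian :
    Continuous (logitHessian : (Fin c → ℝ) → Matrix (Fin c) (Fin c) ℝ) :=
  continuous_softmaxFn.matrix_diagonal.sub
    (continuous_softmaxFn.matrix_vecMulVec continuous_softmaxFn)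

lemma logitHessian_mulVec (z v : Fin c → ℝ) :
    logitHessian z *ᵥ v = fun i => softmaxFn z i * (v i - softmaxFn z ⬝ᵥ v) := by
  ext i
  simp [logitHessian, sub_mulVec, mulVec_diagonal, vecMulVec_mulVec, mul_sub, mul_comm]

lemma dotProduct_logitHessian_mulVec [NeZero c] (z v : Fin c → ℝ) :
    v ⬝ᵥ (logitHessian z *ᵥ v) = ∑ i, softmaxFn z i * (v i - softmaxFn z ⬝ᵥ v) ^ 2 := by
  set m := softmaxFn z ⬝ᵥ v
  have hcentered : ∑ i, softmaxFn z i * (v i - m) = 0 := by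
    simp only [mul_sub, Finset.sum_sub_distrib, ← Finset.sum_mul, sum_softmaxFn, one_mul]
    exact sub_self m
  calc v ⬝ᵥ (logitHessian z *ᵥ v)
      = ∑ i, (softmaxFn z i * (v i - m) ^ 2 + m * (softmaxFn z i * (v i - m))) := by
        rw [logitHessian_mulVec]
        exact Finset.sum_congr rfl fun i _ => by ring
    _ = ∑ i, softmaxFn z i * (v i - m) ^ 2 := by
        rw [Finset.sum_add_distrib, ← Finset.mul_sum, hcentered, mul_zero, add_zero]

lemma posSemidef_logitHessian [NeZero c] (z : Fin c → ℝ) : (logitHessian z).PosSemidef := by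
  refine .of_dotProduct_mulVec_nonneg ?_ fun v => ?_
  · rw [isHermitian_iff_isSymm]
    exact (isSymm_diagonal _).sub (by simp [IsSymm, transpose_vecMulVec])
  · rw [star_trivial, dotProduct_logitHessian_mulVec]
    exact Finset.sum_nonneg fun i _ => mul_nonneg (softmaxFn_pos z i).le (sq_nonneg _)

lemma logitHessian_mulVec_eq_zero_iff [NeZero c] (z v : Fin c → ℝ) :
    logitHessian z *ᵥ v = 0 ↔ ∃ t : ℝ, v = fun _ => t := by
  rw [logitHessian_mulVec]
  constructor
  · intro h
    refine ⟨softmaxFn z ⬝ᵥ v, funext fun i => ?_⟩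
    have := (mul_eq_zero.1 (congrFun h i)).resolve_left (softmaxFn_pos z i).ne'
    exact sub_eq_zero.1 this
  · rintro ⟨t, rfl⟩
    ext i
    simp [dotProduct, ← Finset.sum_mul, sum_softmaxFn]

end LogitHessian

section IntegralMatrix

variable {α n : Type*} [MeasurableSpace α] {μ : Measure α} [Fintype n]

lemma integral_dotProduct {g : α → n → ℝ} (hg : ∀ i, Integrable (fun x => g x i) μ)
    (w : n → ℝ) : ∫ x, w ⬝ᵥ g x ∂μ = w ⬝ᵥ fun i => ∫ x, g x i ∂μ := by
  simp only [dotProduct, ← integral_const_mul]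
  exact integral_finsetSum _ fun i _ => (hg i).const_mul _

variable {m : Type*} {F : α → Matrix m n ℝ}

lemma integrable_mulVec_apply (hF : ∀ i j, Integrable (fun x => F x i j) μ) (v : n → ℝ)
    (i : m) : Integrable (fun x => (F x *ᵥ v) i) μ :=
  integrable_finsetSum _ fun j _ => (hF i j).mul_const _

lemma of_integral_mulVec (hF : ∀ i j, Integrable (fun x => F x i j) μ) (v : n → ℝ) :
    (of fun i j => ∫ x, F x i j ∂μ) *ᵥ v = fun i => ∫ x, (F x *ᵥ v) i ∂μ := by
  ext i
  simp only [mulVec, of_apply, dotProduct_comm _ v, integral_dotProduct (hF i)]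

end IntegralMatrix

section IntegralPosSemidef

variable {α n : Type*} [MeasurableSpace α] {μ : Measure α} [Fintype n]
  {F : α → Matrix n n ℝ}

lemma dotProduct_of_integral_mulVec (hF : ∀ i j, Integrable (fun x => F x i j) μ)
    (v : n → ℝ) :
    v ⬝ᵥ ((of fun i j => ∫ x, F x i j ∂μ) *ᵥ v) = ∫ x, v ⬝ᵥ (F x *ᵥ v) ∂μ := by
  rw [of_integral_mulVec hF, integral_dotProduct (integrable_mulVec_apply hF v)]

lemma posSemidef_of_integral (hF : ∀ i j, Integrable (fun x => F x i j) μ)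
    (hpsd : ∀ x, (F x).PosSemidef) :
    (of fun i j => ∫ x, F x i j ∂μ).PosSemidef := by
  refine .of_dotProduct_mulVec_nonneg ?_ fun v => ?_
  · ext i j
    simp only [conjTranspose_apply, of_apply, star_trivial]
    exact integral_congr_ae (ae_of_all _ fun x => (hpsd x).isHermitian.apply i j)
  · rw [star_trivial, dotProduct_of_integral_mulVec hF]
    exact integral_nonneg fun x => by simpa using (hpsd x).dotProduct_mulVec_nonneg v

lemma of_integral_mulVec_eq_zero_iff (hF : ∀ i j, Integrable (fun x => F x i j) μ)
    (hpsd : ∀ x, (F x).PosSemidef) (v : n → ℝ) :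
    (of fun i j => ∫ x, F x i j ∂μ) *ᵥ v = 0 ↔ ∀ᵐ x ∂μ, F x *ᵥ v = 0 := by
  constructor
  · intro h
    have hint : Integrable (fun x => v ⬝ᵥ (F x *ᵥ v)) μ :=
      integrable_finsetSum _ fun i _ => (integrable_mulVec_apply hF v i).const_mul _
    have hquad : ∫ x, v ⬝ᵥ (F x *ᵥ v) ∂μ = 0 := by
      rw [← dotProduct_of_integral_mulVec hF, h, dotProduct_zero]
    have hnonneg : ∀ x, 0 ≤ v ⬝ᵥ (F x *ᵥ v) := fun x => by
      simpa using (hpsd x).dotProduct_mulVec_nonneg v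
    filter_upwards [(integral_eq_zero_iff_of_nonneg hnonneg hint).1 hquad] with x hx
    simpa using ((hpsd x).dotProduct_mulVec_zero_iff v).1 (by simpa using hx)
  · intro h
    rw [of_integral_mulVec hF]
    ext i
    exact integral_eq_zero_of_ae (by filter_upwards [h] with x hx using congrFun hx i)

end IntegralPosSemidef

lemma Matrix.rank_eq_card_sub_one_of_ker_eq_const {K n : Type*} [Field K] [Fintype n]
    [Nonempty n] {m : Type*} {M : Matrix m n K}
    (h : ∀ v : n → K, M *ᵥ v = 0 ↔ ∃ t : K, v = fun _ => t) :
    M.rank = Fintype.card n - 1 := by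
  have hker : LinearMap.ker M.mulVecLin = K ∙ (1 : n → K) := by
    ext v
    rw [LinearMap.mem_ker, mulVecLin_apply, h, Submodule.mem_span_singleton]
    simp [funext_iff, eq_comm]
  have := LinearMap.finrank_range_add_finrank_ker M.mulVecLin
  rw [hker, finrank_span_singleton one_ne_zero, Module.finrank_fintype_fun_eq_card] at this
  rw [Matrix.rank]
  omega

theorem expected_logit_hessian_rank_sub_one_general
    (c : ℕ) (hc : 2 ≤ c) (σ : ℝ≥0) :
    let μ : Measure (Fin c → ℝ) := Measure.pi fun _ => gaussianReal 0 (σ ^ 2)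
    let Atil : Matrix (Fin c) (Fin c) ℝ :=
      Matrix.of fun i j => ∫ z, logitHessian z i j ∂μ
    Atil.IsSymm ∧ Atil.PosSemidef ∧
    Atil.mulVec (fun _ => 1) = 0 ∧
    (∀ v : Fin c → ℝ, Atil.mulVec v = 0 ↔ ∃ t : ℝ, v = fun _ => t) ∧
    Atil.rank = c - 1 := by
  intro μ Atil
  have : NeZero c := ⟨by omega⟩
  have hint : ∀ i j, Integrable (fun z => logitHessian z i j) μ := fun i j =>
    .of_bound (continuous_logitHessian.matrix_elem i j).aestronglyMeasurable 1
      (ae_of_all _ fun z => abs_logitHessian_apply_le_one z i j)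
  have hpsd : Atil.PosSemidef := posSemidef_of_integral hint posSemidef_logitHessian
  have hker : ∀ v, Atil *ᵥ v = 0 ↔ ∃ t : ℝ, v = fun _ => t := fun v => by
    simp only [Atil, of_integral_mulVec_eq_zero_iff hint posSemidef_logitHessian,
      logitHessian_mulVec_eq_zero_iff, Filter.eventually_const]
  refine ⟨isHermitian_iff_isSymm.1 hpsd.isHermitian, hpsd, (hker _).2 ⟨1, rfl⟩, hker, ?_⟩
  simpa using rank_eq_card_sub_one_of_ker_eq_const hker

/-- **The expected logit Hessian over a spherical Gaussian has rank exactly `c - 1`,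
with kernel the span of the all-ones vector.**  For `z ~ N(0, σ² I_c)` and
`Ã = E[A(z)]` (entrywise expectation), `Ã` is symmetric positive semidefinite,
`Ã 1_c = 0`, its kernel is exactly the span of `1_c`, and `rank Ã = c - 1`. -/
theorem expected_logit_hessian_rank_sub_one
    (c : ℕ) (hc : 2 ≤ c) (σ : ℝ≥0) (hσ : 0 < σ) :
    let μ : Measure (Fin c → ℝ) := Measure.pi fun _ => gaussianReal 0 (σ ^ 2)
    let Atil : Matrix (Fin c) (Fin c) ℝ :=
      Matrix.of fun i j => ∫ z, logitHessian z i j ∂μ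
    Atil.IsSymm ∧ Atil.PosSemidef ∧
    Atil.mulVec (fun _ => 1) = 0 ∧
    (∀ v : Fin c → ℝ, Atil.mulVec v = 0 ↔ ∃ t : ℝ, v = fun _ => t) ∧
    Atil.rank = c - 1 :=
  expected_logit_hessian_rank_sub_one_general c hc σ
end
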